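/- arXiv:2605.15114 — 2 statements merged into one kernel-verified Lean document; each statement's English description precedes it below -/
import Mathlib

section
/- Let H be a finite-dimensional complex Hilbert space, n ≥ 1, and let ρ_n, σ_n ∈ D(H^{⊗n}) be two states. Then for every integer k with 1 ≤ k ≤ n, the averaged trace distance between the size-k marginals is bounded by the Wasserstein distance: binom(n,k)^{−1} Σ_{I⊆[n], |I|=k} (1/2)‖(ρ_n)_I − (σ_n)_I‖₁ ≤ (k/n)·‖ρ_n − σ_n‖_{W1}. -/
/-!
Take any decomposition `ρ - σ = ∑ᵢ cᵢ (τᵢ - ηᵢ)` admissible in the definition of `W1`.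
Since `τᵢ` and `ηᵢ` agree once site `i` is traced out, they agree on every marginal not
containing `i`; hence the `I`-marginal of `ρ - σ` is the difference of the two positive
matrices `∑_{i ∈ I} cᵢ (τᵢ)_I` and `∑_{i ∈ I} cᵢ (ηᵢ)_I`, both of trace `∑_{i ∈ I} cᵢ`, and its
trace norm is at most `2 ∑_{i ∈ I} cᵢ`. Averaging over `|I| = k` counts every site
`C(n-1, k-1)` times, and `C(n-1, k-1) / C(n, k) = k / n`. The infimum defining `W1` is over a
nonempty set: the hybrid states `ρ_J ⊗ σ_{Jᶜ}` along `J = {0, …, m-1}` telescope from `σ` to `ρ`.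
-/

open scoped BigOperators ComplexOrder
open Filter Matrix

noncomputable section

namespace AlmostIID

/-- The trace norm `‖A‖₁ = Tr √(A†A)` of a square complex matrix. -/
def traceNorm {m : Type*} [Fintype m] [DecidableEq m] (A : Matrix m m ℂ) : ℝ :=
  (((Matrix.posSemidef_conjTranspose_mul_self A).1.eigenvectorUnitary.1 *
      diagonal (((↑) : ℝ → ℂ) ∘ (√·) ∘ (Matrix.posSemidef_conjTranspose_mul_self A).1.eigenvalues) *
      (star (Matrix.posSemidef_conjTranspose_mul_self A).1.eigenvectorUnitary : Matrix m m ℂ)).trace).re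

/-- A density matrix (state): positive semidefinite with unit trace. -/
def IsState {m : Type*} [Fintype m] (M : Matrix m m ℂ) : Prop :=
  M.PosSemidef ∧ M.trace = 1

/-- The marginal (reduced density matrix) of an `n`-partite operator on the
coordinates in `I`, i.e. the partial trace over the complement of `I`. -/
def marginal {κ : Type*} [Fintype κ] {n : ℕ}
    (M : Matrix (Fin n → κ) (Fin n → κ) ℂ) (I : Finset (Fin n)) :
    Matrix ({i : Fin n // i ∈ I} → κ) ({i : Fin n // i ∈ I} → κ) ℂ :=
  fun a b => ∑ f : {i : Fin n // i ∉ I} → κ,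
    M (fun i => if h : i ∈ I then a ⟨i, h⟩ else f ⟨i, h⟩)
      (fun i => if h : i ∈ I then b ⟨i, h⟩ else f ⟨i, h⟩)

/-- The single-site reduced density matrix on the `i`-th tensor factor. -/
def siteMarginal {κ : Type*} [Fintype κ] {n : ℕ}
    (M : Matrix (Fin n → κ) (Fin n → κ) ℂ) (i : Fin n) : Matrix κ κ ℂ :=
  fun a b => ∑ f : {j : Fin n // j ≠ i} → κ,
    M (fun j => if h : j = i then a else f ⟨j, h⟩)
      (fun j => if h : j = i then b else f ⟨j, h⟩)

/-- The i.i.d. product state `ρ^{⊗ι}` on the tensor factors indexed by `ι`. -/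
def iidOn {κ : Type*} (ι : Type*) [Fintype ι] (ρ : Matrix κ κ ℂ) :
    Matrix (ι → κ) (ι → κ) ℂ :=
  fun a b => ∏ i, ρ (a i) (b i)

/-- The product state `φ 0 ⊗ φ 1 ⊗ ⋯`. -/
def prodState {κ : Type*} {ι : Type*} [Fintype ι] (φ : ι → Matrix κ κ ℂ) :
    Matrix (ι → κ) (ι → κ) ℂ :=
  fun a b => ∏ i, φ i (a i) (b i)

/-- The quantum Wasserstein norm of order 1 of a difference of states:
the minimum of `Σ cᵢ` over decompositions `X = Σ cᵢ (τ⁽ⁱ⁾ − η⁽ⁱ⁾)` with `cᵢ ≥ 0`,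
`τ⁽ⁱ⁾, η⁽ⁱ⁾` states with equal partial traces over the `i`-th factor. -/
def W1 {κ : Type*} [Fintype κ] [DecidableEq κ] {n : ℕ}
    (X : Matrix (Fin n → κ) (Fin n → κ) ℂ) : ℝ :=
  sInf { w : ℝ |
    ∃ (c : Fin n → ℝ) (τ η : Fin n → Matrix (Fin n → κ) (Fin n → κ) ℂ),
      (∀ i, 0 ≤ c i) ∧ (∀ i, IsState (τ i)) ∧ (∀ i, IsState (η i)) ∧
      (∀ i, marginal (τ i) ({i}ᶜ : Finset (Fin n)) = marginal (η i) ({i}ᶜ : Finset (Fin n))) ∧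
      X = ∑ i, c i • (τ i - η i) ∧ w = ∑ i, c i }

/-- The local variation norm. -/
def LV {κ : Type*} [Fintype κ] [DecidableEq κ] {n : ℕ}
    (X : Matrix (Fin n → κ) (Fin n → κ) ℂ) : ℝ :=
  (1/2) * ∑ k ∈ Finset.Icc 1 n, ((2:ℝ)^k)⁻¹ *
    (((n.choose k : ℝ))⁻¹ *
      ∑ I ∈ Finset.powersetCard k (Finset.univ : Finset (Fin n)),
        traceNorm (marginal X I))

lemma _root_.Finset.exists_restrict_eq {ι β : Type*} [DecidableEq ι] [Nonempty β] (J : Finset ι)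
    (a : J → β) : ∃ u : ι → β, J.restrict u = a :=
  ⟨_, Function.restrict_updateFinset (fun _ : ι => Classical.arbitrary β) a⟩

lemma _root_.Finset.restrict_update_of_notMem {ι β : Type*} [DecidableEq ι] {S : Finset ι} {i : ι}
    (hi : i ∉ S) (u : ι → β) (y : β) : S.restrict (Function.update u i y) = S.restrict u := by
  funext x
  exact Function.update_of_ne (by rintro rfl; exact hi x.2) _ _

def _root_.Finset.restrictComplEquiv {ι : Type*} [Fintype ι] [DecidableEq ι] (J : Finset ι)
    (β : Type*) : (ι → β) ≃ (J → β) × (↥Jᶜ → β) where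
  toFun u := (J.restrict u, Jᶜ.restrict u)
  invFun p x := if h : x ∈ J then p.1 ⟨x, h⟩ else p.2 ⟨x, Finset.mem_compl.2 h⟩
  left_inv u := by
    funext x
    by_cases h : x ∈ J <;> simp [h]
  right_inv p := by
    ext x
    · simp [x.2]
    · simp [Finset.mem_compl.1 x.2]

def _root_.Finset.complInsertEquiv {ι β : Type*} [DecidableEq ι] {i : ι} {J : Finset ι}
    (hi : i ∉ J) : β × ({x // x ∉ insert i J} → β) ≃ ({x // x ∉ J} → β) where
  toFun p x := if h : x.1 = i then p.1 else p.2 ⟨x.1, by simp [h, x.2]⟩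
  invFun f := (f ⟨i, hi⟩, fun x => f ⟨x.1, fun hx => x.2 (Finset.mem_insert_of_mem hx)⟩)
  left_inv p := by
    ext x
    · simp
    · have : x.1 ≠ i := fun h => x.2 (by simp [h])
      simp [this]
  right_inv f := by
    funext x
    by_cases h : x.1 = i
    · obtain ⟨x, hx⟩ := x
      subst h
      simp
    · simp [h]

lemma _root_.Finset.sum_powersetCard_sum {ι M : Type*} [DecidableEq ι] [AddCommMonoid M]
    (s : Finset ι) {k : ℕ} (hk : 1 ≤ k) (f : ι → M) :
    ∑ I ∈ s.powersetCard k, ∑ i ∈ I, f i = (s.card - 1).choose (k - 1) • ∑ i ∈ s, f i := by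
  rw [Finset.sum_comm' (t' := s) (s' := fun i => (s.powersetCard k).filter (i ∈ ·))
    (by intro I i; simp only [Finset.mem_powersetCard, Finset.mem_filter]; grind), Finset.smul_sum]
  refine Finset.sum_congr rfl fun i hi => ?_
  rw [Finset.sum_const]
  congr 1
  simpa using Finset.card_filter_powersetCard_subset {i} s k (by simpa) (by simpa)

lemma _root_.Nat.cast_choose_pred_div_choose {K : Type*} [Field K] [CharZero K] {k n : ℕ}
    (hk : 1 ≤ k) (hkn : k ≤ n) : ((n - 1).choose (k - 1) : K) / n.choose k = k / n := by
  obtain ⟨k, rfl⟩ : ∃ k', k = k' + 1 := ⟨k - 1, by omega⟩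
  obtain ⟨n, rfl⟩ : ∃ n', n = n' + 1 := ⟨n - 1, by omega⟩
  rw [Nat.add_sub_cancel, Nat.add_sub_cancel, div_eq_div_iff
    (Nat.cast_ne_zero.2 (Nat.choose_pos hkn).ne') (Nat.cast_ne_zero.2 n.succ_ne_zero)]
  norm_cast
  rw [mul_comm, Nat.add_one_mul_choose_eq, mul_comm]

open scoped MatrixOrder in
lemma traceNorm_eq_sum_abs_eigenvalues {m : Type*} [Fintype m] [DecidableEq m]
    {X : Matrix m m ℂ} (hX : X.IsHermitian) : traceNorm X = ∑ i, |hX.eigenvalues i| := by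
  have h1 : traceNorm X = (cfc Real.sqrt (Xᴴ * X)).trace.re := by
    rw [IsHermitian.cfc_eq (posSemidef_conjTranspose_mul_self X).1, IsHermitian.cfc,
      Unitary.conjStarAlgAut_apply]
    rfl
  have h2 : cfc Real.sqrt (Xᴴ * X) = cfc (fun x : ℝ => |x|) X := by
    rw [hX.eq, ← sq, ← cfc_pow_id (R := ℝ) X 2 hX.isSelfAdjoint, ← cfc_comp' Real.sqrt (· ^ 2) X]
    exact cfc_congr fun x _ => Real.sqrt_sq_eq_abs x
  rw [h1, h2, hX.cfc_eq, IsHermitian.cfc, Unitary.conjStarAlgAut_apply, trace_mul_cycle,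
    Unitary.coe_star_mul_self, Matrix.one_mul, trace_diagonal]
  simp

-- In an eigenbasis of `P - Q`, each eigenvalue is the difference of the nonnegative
-- diagonal entries of `P` and `Q`.
lemma traceNorm_sub_le {m : Type*} [Fintype m] [DecidableEq m] {P Q : Matrix m m ℂ}
    (hP : P.PosSemidef) (hQ : Q.PosSemidef) :
    traceNorm (P - Q) ≤ P.trace.re + Q.trace.re := by
  have hX : (P - Q).IsHermitian := hP.1.sub hQ.1
  set U : Matrix m m ℂ := (hX.eigenvectorUnitary : Matrix m m ℂ)
  have hdiag : diagonal (RCLike.ofReal ∘ hX.eigenvalues) = Uᴴ * P * U - Uᴴ * Q * U := by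
    rw [← hX.conjStarAlgAut_star_eigenvectorUnitary, Unitary.conjStarAlgAut_star_apply,
      Matrix.mul_sub, Matrix.sub_mul, star_eq_conjTranspose]
  have htr (A : Matrix m m ℂ) : (Uᴴ * A * U).trace = A.trace := by
    rw [trace_mul_cycle, ← star_eq_conjTranspose,
      mem_unitaryGroup_iff.mp hX.eigenvectorUnitary.2, Matrix.one_mul]
  have hentry (i : m) : |hX.eigenvalues i| ≤ ((Uᴴ * P * U) i i).re + ((Uᴴ * Q * U) i i).re := by
    have hp := Complex.nonneg_iff.mp ((hP.conjTranspose_mul_mul_same U).diag_nonneg (i := i))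
    have hq := Complex.nonneg_iff.mp ((hQ.conjTranspose_mul_mul_same U).diag_nonneg (i := i))
    have hre : hX.eigenvalues i = ((Uᴴ * P * U) i i).re - ((Uᴴ * Q * U) i i).re := by
      simpa using congrArg Complex.re (congrFun (congrFun hdiag i) i)
    rw [hre, abs_le]
    constructor <;> linarith [hp.1, hq.1]
  calc traceNorm (P - Q) = ∑ i, |hX.eigenvalues i| := traceNorm_eq_sum_abs_eigenvalues hX
    _ ≤ ∑ i, (((Uᴴ * P * U) i i).re + ((Uᴴ * Q * U) i i).re) :=
      Finset.sum_le_sum fun i _ => hentry i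
    _ = P.trace.re + Q.trace.re := by
      rw [Finset.sum_add_distrib, ← htr P, ← htr Q]
      simp [trace, Complex.re_sum]

lemma IsState.nonempty {m : Type*} [Fintype m] {ρ : Matrix m m ℂ} (hρ : IsState ρ) :
    Nonempty m := by
  by_contra h
  rw [not_nonempty_iff] at h
  simpa [trace] using hρ.2

lemma traceNorm_sum_smul_sub_le {m ι : Type*} [Fintype m] [DecidableEq m] (s : Finset ι)
    {c : ι → ℝ} (hc : ∀ i ∈ s, 0 ≤ c i) {ρ σ : ι → Matrix m m ℂ}
    (hρ : ∀ i ∈ s, IsState (ρ i)) (hσ : ∀ i ∈ s, IsState (σ i)) :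
    traceNorm (∑ i ∈ s, c i • ρ i - ∑ i ∈ s, c i • σ i) ≤ 2 * ∑ i ∈ s, c i := by
  have hmix (τ : ι → Matrix m m ℂ) (hτ : ∀ i ∈ s, IsState (τ i)) :
      (∑ i ∈ s, c i • τ i).PosSemidef ∧ (∑ i ∈ s, c i • τ i).trace.re = ∑ i ∈ s, c i := by
    refine ⟨posSemidef_sum s fun i hi => (hτ i hi).1.smul (hc i hi), ?_⟩
    rw [trace_sum, Complex.re_sum]
    refine Finset.sum_congr rfl fun i hi => ?_
    simp [trace_smul, (hτ i hi).2]
  obtain ⟨hP, hPtr⟩ := hmix ρ hρ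
  obtain ⟨hQ, hQtr⟩ := hmix σ hσ
  linarith [traceNorm_sub_le hP hQ]

section Marginal

variable {κ : Type*} [Fintype κ] {n : ℕ}

lemma marginal_sub (A B : Matrix (Fin n → κ) (Fin n → κ) ℂ) (I : Finset (Fin n)) :
    marginal (A - B) I = marginal A I - marginal B I := by
  ext a b
  simp [marginal, Finset.sum_sub_distrib]

lemma marginal_smul (c : ℝ) (A : Matrix (Fin n → κ) (Fin n → κ) ℂ) (I : Finset (Fin n)) :
    marginal (c • A) I = c • marginal A I := by
  ext a b
  simp [marginal, Finset.smul_sum]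

lemma marginal_sum {ι : Type*} (s : Finset ι) (A : ι → Matrix (Fin n → κ) (Fin n → κ) ℂ)
    (I : Finset (Fin n)) : marginal (∑ j ∈ s, A j) I = ∑ j ∈ s, marginal (A j) I := by
  ext a b
  simp only [marginal, Matrix.sum_apply]
  exact Finset.sum_comm

lemma marginal_eq_sum_submatrix (M : Matrix (Fin n → κ) (Fin n → κ) ℂ) (I : Finset (Fin n)) :
    marginal M I = ∑ f, M.submatrix
      (fun a => (Equiv.piEquivPiSubtypeProd (· ∈ I) fun _ => κ).symm (a, f))
      (fun a => (Equiv.piEquivPiSubtypeProd (· ∈ I) fun _ => κ).symm (a, f)) := by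
  ext a b
  simp only [Matrix.sum_apply]
  rfl

lemma posSemidef_marginal {M : Matrix (Fin n → κ) (Fin n → κ) ℂ} (hM : M.PosSemidef)
    (I : Finset (Fin n)) : (marginal M I).PosSemidef := by
  rw [marginal_eq_sum_submatrix]
  exact posSemidef_sum _ fun f _ => hM.submatrix _

lemma trace_marginal (M : Matrix (Fin n → κ) (Fin n → κ) ℂ) (I : Finset (Fin n)) :
    (marginal M I).trace = M.trace :=
  (Fintype.sum_prod_type' _).symm.trans
    ((Equiv.piEquivPiSubtypeProd (· ∈ I) fun _ => κ).symm.sum_comp fun u => M u u)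

-- The `∅`-marginal is a `1 × 1` matrix, and marginals preserve the trace.
lemma marginal_empty_apply (M : Matrix (Fin n → κ) (Fin n → κ) ℂ)
    (a b : {x : Fin n // x ∈ (∅ : Finset (Fin n))} → κ) : marginal M ∅ a b = M.trace := by
  rw [← trace_marginal M ∅, trace, Fintype.sum_subsingleton _ a]
  exact congrArg₂ _ (Subsingleton.elim _ _) (Subsingleton.elim _ _)

lemma marginal_univ_apply (M : Matrix (Fin n → κ) (Fin n → κ) ℂ) (u v : Fin n → κ) :
    marginal M Finset.univ (Finset.univ.restrict u) (Finset.univ.restrict v) = M u v := by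
  have : IsEmpty {x : Fin n // x ∉ Finset.univ} := ⟨fun x => x.2 (Finset.mem_univ _)⟩
  simp [marginal]

variable {i : Fin n} {J : Finset (Fin n)}

lemma sum_marginal_insert_update (M : Matrix (Fin n → κ) (Fin n → κ) ℂ) (hi : i ∉ J)
    (u v : Fin n → κ) :
    ∑ y, marginal M (insert i J) ((insert i J).restrict (Function.update u i y))
        ((insert i J).restrict (Function.update v i y)) =
      marginal M J (J.restrict u) (J.restrict v) := by
  rw [marginal, ← (Finset.complInsertEquiv hi).sum_comp, Fintype.sum_prod_type]
  refine Finset.sum_congr rfl fun y _ => Finset.sum_congr rfl fun g _ => ?_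
  congr 1 <;> funext x <;> by_cases hx : x = i <;> by_cases hJ : x ∈ J <;>
    simp_all [Finset.complInsertEquiv, Function.update]

lemma marginal_compl_singleton_apply (M : Matrix (Fin n → κ) (Fin n → κ) ℂ) (i : Fin n)
    (u v : Fin n → κ) :
    marginal M {i}ᶜ (Finset.restrict {i}ᶜ u) (Finset.restrict {i}ᶜ v) =
      ∑ y, M (Function.update u i y) (Function.update v i y) := by
  have h := sum_marginal_insert_update M (i := i) (J := {i}ᶜ) (by simp) u v
  rw [Finset.insert_compl_self] at h
  simp only [marginal_univ_apply] at h
  exact h.symm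

lemma marginal_eq_of_marginal_insert_eq [Nonempty κ] {τ η : Matrix (Fin n → κ) (Fin n → κ) ℂ}
    (hi : i ∉ J) (h : marginal τ (insert i J) = marginal η (insert i J)) :
    marginal τ J = marginal η J := by
  ext a b
  obtain ⟨u, rfl⟩ := J.exists_restrict_eq a
  obtain ⟨v, rfl⟩ := J.exists_restrict_eq b
  rw [← sum_marginal_insert_update τ hi, ← sum_marginal_insert_update η hi, h]

lemma marginal_eq_of_subset [Nonempty κ] {τ η : Matrix (Fin n → κ) (Fin n → κ) ℂ}
    {I : Finset (Fin n)} (hIJ : I ⊆ J) (h : marginal τ J = marginal η J) :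
    marginal τ I = marginal η I := by
  suffices ∀ S : Finset (Fin n), Disjoint S I →
      marginal τ (S ∪ I) = marginal η (S ∪ I) → marginal τ I = marginal η I from
    this (J \ I) disjoint_sdiff_self_left (by rwa [Finset.sdiff_union_of_subset hIJ])
  intro S
  induction S using Finset.induction_on with
  | empty => intro _ h; rwa [Finset.empty_union] at h
  | insert j S hj ih =>
    intro hdisj hS
    rw [Finset.disjoint_insert_left] at hdisj
    rw [Finset.insert_union] at hS
    exact ih hdisj.2 (marginal_eq_of_marginal_insert_eq (by simp [hj, hdisj.1]) hS)

end Marginal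

section Hybrid

open scoped Kronecker

variable {κ : Type*} [Fintype κ] {n : ℕ}

def hybrid (ρ σ : Matrix (Fin n → κ) (Fin n → κ) ℂ) (J : Finset (Fin n)) :
    Matrix (Fin n → κ) (Fin n → κ) ℂ :=
  (marginal ρ J ⊗ₖ marginal σ Jᶜ).submatrix (J.restrictComplEquiv κ) (J.restrictComplEquiv κ)

lemma hybrid_apply (ρ σ : Matrix (Fin n → κ) (Fin n → κ) ℂ) (J : Finset (Fin n))
    (u v : Fin n → κ) :
    hybrid ρ σ J u v =
      marginal ρ J (J.restrict u) (J.restrict v) * marginal σ Jᶜ (Jᶜ.restrict u) (Jᶜ.restrict v) :=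
  rfl

lemma isState_marginal {ρ : Matrix (Fin n → κ) (Fin n → κ) ℂ} (hρ : IsState ρ)
    (I : Finset (Fin n)) : IsState (marginal ρ I) :=
  ⟨posSemidef_marginal hρ.1 I, (trace_marginal ρ I).trans hρ.2⟩

lemma isState_hybrid {ρ σ : Matrix (Fin n → κ) (Fin n → κ) ℂ} (hρ : IsState ρ) (hσ : IsState σ)
    (J : Finset (Fin n)) : IsState (hybrid ρ σ J) := by
  refine ⟨((posSemidef_marginal hρ.1 J).kronecker (posSemidef_marginal hσ.1 Jᶜ)).submatrix _, ?_⟩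
  calc (hybrid ρ σ J).trace = (marginal ρ J ⊗ₖ marginal σ Jᶜ).trace :=
        (J.restrictComplEquiv κ).sum_comp fun p => (marginal ρ J ⊗ₖ marginal σ Jᶜ) p p
    _ = 1 := by rw [trace_kronecker, (isState_marginal hρ J).2, (isState_marginal hσ Jᶜ).2, one_mul]

lemma hybrid_univ (ρ : Matrix (Fin n → κ) (Fin n → κ) ℂ) {σ : Matrix (Fin n → κ) (Fin n → κ) ℂ}
    (hσ : σ.trace = 1) : hybrid ρ σ Finset.univ = ρ := by
  ext u v
  rw [hybrid_apply, marginal_univ_apply, Finset.compl_univ, marginal_empty_apply, hσ, mul_one]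

lemma hybrid_empty {ρ : Matrix (Fin n → κ) (Fin n → κ) ℂ} (hρ : ρ.trace = 1)
    (σ : Matrix (Fin n → κ) (Fin n → κ) ℂ) : hybrid ρ σ ∅ = σ := by
  ext u v
  rw [hybrid_apply, marginal_empty_apply, Finset.compl_empty, marginal_univ_apply, hρ, one_mul]

lemma marginal_hybrid_insert [Nonempty κ] (ρ σ : Matrix (Fin n → κ) (Fin n → κ) ℂ)
    {i : Fin n} {J : Finset (Fin n)} (hi : i ∉ J) :
    marginal (hybrid ρ σ (insert i J)) {i}ᶜ = marginal (hybrid ρ σ J) {i}ᶜ := by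
  ext a b
  obtain ⟨u, rfl⟩ := Finset.exists_restrict_eq {i}ᶜ a
  obtain ⟨v, rfl⟩ := Finset.exists_restrict_eq {i}ᶜ b
  have hi' : i ∉ (insert i J)ᶜ := by simp
  have hJc : Jᶜ = insert i (insert i J)ᶜ := by
    ext x
    by_cases hx : x = i <;> simp [hx, hi]
  simp only [marginal_compl_singleton_apply, hybrid_apply, Finset.restrict_update_of_notMem hi,
    Finset.restrict_update_of_notMem hi', ← Finset.sum_mul, ← Finset.mul_sum,
    sum_marginal_insert_update _ hi]
  rw [hJc, sum_marginal_insert_update _ hi']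

end Hybrid

section Wasserstein

variable {κ : Type*} [Fintype κ] {n : ℕ}

def IsLocalDecomposition (X : Matrix (Fin n → κ) (Fin n → κ) ℂ) (c : Fin n → ℝ)
    (τ η : Fin n → Matrix (Fin n → κ) (Fin n → κ) ℂ) : Prop :=
  (∀ i, 0 ≤ c i) ∧ (∀ i, IsState (τ i)) ∧ (∀ i, IsState (η i)) ∧
    (∀ i, marginal (τ i) {i}ᶜ = marginal (η i) {i}ᶜ) ∧ X = ∑ i, c i • (τ i - η i)

lemma W1_eq_sInf [DecidableEq κ] (X : Matrix (Fin n → κ) (Fin n → κ) ℂ) :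
    W1 X = sInf {w | ∃ c τ η, IsLocalDecomposition X c τ η ∧ w = ∑ i, c i} := by
  simp only [W1, IsLocalDecomposition, and_assoc]

lemma le_mul_W1 [DecidableEq κ] {X : Matrix (Fin n → κ) (Fin n → κ) ℂ} {a b : ℝ} (ha : 0 ≤ a)
    (hX : ∃ c τ η, IsLocalDecomposition X c τ η)
    (h : ∀ c τ η, IsLocalDecomposition X c τ η → b ≤ a * ∑ i, c i) : b ≤ a * W1 X := by
  rw [W1_eq_sInf, ← smul_eq_mul, ← Real.sInf_smul_of_nonneg ha]
  obtain ⟨c, τ, η, hD⟩ := hX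
  refine le_csInf ⟨_, Set.smul_mem_smul_set ⟨c, τ, η, hD, rfl⟩⟩ ?_
  rintro _ ⟨_, ⟨c, τ, η, hD, rfl⟩, rfl⟩
  exact h c τ η hD

lemma exists_isLocalDecomposition {ρ σ : Matrix (Fin n → κ) (Fin n → κ) ℂ} (hρ : IsState ρ)
    (hσ : IsState σ) : ∃ c τ η, IsLocalDecomposition (ρ - σ) c τ η := by
  let J (m : ℕ) : Finset (Fin n) := Finset.univ.filter fun x => (x : ℕ) < m
  have hJ_succ (i : Fin n) : J (i + 1) = insert i (J i) := by
    ext x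
    simp only [J, Finset.mem_filter, Finset.mem_univ, true_and, Finset.mem_insert, Fin.ext_iff]
    omega
  refine ⟨fun _ => 1, fun i => hybrid ρ σ (J (i + 1)), fun i => hybrid ρ σ (J i),
    fun _ => zero_le_one, fun _ => isState_hybrid hρ hσ _, fun _ => isState_hybrid hρ hσ _,
    fun i => ?_, ?_⟩
  · have : Nonempty κ := hρ.nonempty.map (· i)
    dsimp only
    rw [hJ_succ]
    exact marginal_hybrid_insert ρ σ (by simp [J])
  · have hJ_zero : J 0 = ∅ := by ext; simp [J]
    have hJ_n : J n = Finset.univ := by ext; simp [J]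
    simp only [one_smul]
    rw [Fin.sum_univ_eq_sum_range (fun m => hybrid ρ σ (J (m + 1)) - hybrid ρ σ (J m)),
      Finset.sum_range_sub (fun m => hybrid ρ σ (J m)), hJ_n, hJ_zero, hybrid_univ ρ hσ.2,
      hybrid_empty hρ.2]

lemma traceNorm_marginal_le [DecidableEq κ] {X : Matrix (Fin n → κ) (Fin n → κ) ℂ}
    {c : Fin n → ℝ} {τ η : Fin n → Matrix (Fin n → κ) (Fin n → κ) ℂ}
    (hD : IsLocalDecomposition X c τ η) (I : Finset (Fin n)) : traceNorm (marginal X I) ≤ 2 * ∑ i ∈ I, c i := by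
  obtain ⟨hc, hτ, hη, hloc, rfl⟩ := hD
  have hvanish (i : Fin n) (hi : i ∉ I) : marginal (c i • (τ i - η i)) I = 0 := by
    have : Nonempty κ := (hτ i).nonempty.map (· i)
    rw [marginal_smul, marginal_sub,
      marginal_eq_of_subset (Finset.subset_compl_singleton.2 hi) (hloc i), sub_self, smul_zero]
  have hsplit : marginal (∑ i, c i • (τ i - η i)) I =
      ∑ i ∈ I, c i • marginal (τ i) I - ∑ i ∈ I, c i • marginal (η i) I := by
    rw [marginal_sum, ← Finset.sum_subset (Finset.subset_univ I) fun i _ hi => hvanish i hi,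
      ← Finset.sum_sub_distrib]
    simp only [marginal_smul, marginal_sub, smul_sub]
  rw [hsplit]
  exact traceNorm_sum_smul_sub_le I (fun i _ => hc i) (fun i _ => isState_marginal (hτ i) I)
    (fun i _ => isState_marginal (hη i) I)

end Wasserstein

theorem averaged_marginal_traceDist_le_W1_general
    {d : ℕ} {n : ℕ} (k : ℕ) (hk1 : 1 ≤ k) (hkn : k ≤ n)
    (ρ σ : Matrix (Fin n → Fin d) (Fin n → Fin d) ℂ)
    (hρ : IsState ρ) (hσ : IsState σ) :
    ((n.choose k : ℝ))⁻¹ *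
        ∑ I ∈ Finset.powersetCard k (Finset.univ : Finset (Fin n)),
          (1 / 2) * traceNorm (marginal ρ I - marginal σ I)
      ≤ ((k : ℝ) / n) * W1 (ρ - σ) := by
  refine le_mul_W1 (by positivity) (exists_isLocalDecomposition hρ hσ) fun c τ η hD => ?_
  calc _ ≤ ((n.choose k : ℝ))⁻¹ *
          ∑ I ∈ Finset.powersetCard k (Finset.univ : Finset (Fin n)), ∑ i ∈ I, c i := by
        gcongr with I
        rw [← marginal_sub]
        linarith [traceNorm_marginal_le hD I]
    _ = ((k : ℝ) / n) * ∑ i, c i := by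
        rw [Finset.sum_powersetCard_sum _ hk1, Finset.card_univ, Fintype.card_fin, nsmul_eq_mul,
          ← mul_assoc, inv_mul_eq_div, Nat.cast_choose_pred_div_choose hk1 hkn]

/-- For states `ρ, σ` on `H^{⊗n}` and `1 ≤ k ≤ n`, the averaged
trace distance between the size-`k` marginals is bounded by `(k/n)·‖ρ − σ‖_{W1}`. -/
theorem averaged_marginal_traceDist_le_W1
    {d : ℕ} {n : ℕ} (hn : 1 ≤ n) (k : ℕ) (hk1 : 1 ≤ k) (hkn : k ≤ n)
    (ρ σ : Matrix (Fin n → Fin d) (Fin n → Fin d) ℂ)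
    (hρ : IsState ρ) (hσ : IsState σ) :
    ((n.choose k : ℝ))⁻¹ *
        ∑ I ∈ Finset.powersetCard k (Finset.univ : Finset (Fin n)),
          (1 / 2) * traceNorm (marginal ρ I - marginal σ I)
      ≤ ((k : ℝ) / n) * W1 (ρ - σ) :=
  averaged_marginal_traceDist_le_W1_general k hk1 hkn ρ σ hρ hσ

end AlmostIID
end
end

section
/- Let n, r be positive integers with n even and r < n/2. Let f : {0,1}^n → ℝ be a function that can be written as f = Σ_{ℓ=1}^m f_ℓ, where for each ℓ there is a set S_ℓ ⊆ [n] with |S_ℓ| ≤ r such that f_ℓ(x) depends only on the coordinates (x_i)_{i∈S_ℓ}. If f(x) = 0 for every x ∈ {0,1}^n whose Hamming weight ‖x‖₁ = Σ_i x_i differs from n/2, then f is identically zero. -/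
open scoped BigOperators

/-- Let `n, r` be positive integers with `n` even and `r < n/2`.
If `f : {0,1}ⁿ → ℝ` is a sum of functions each depending on at most `r` coordinates,
and `f` vanishes on every string whose Hamming weight differs from `n/2`, then `f ≡ 0`. -/
theorem sum_of_juntas_vanishing_off_middle_layer_eq_zero
    (n r m : ℕ) (hn : Even n) (hnpos : 0 < n) (hrpos : 0 < r) (hr : 2 * r < n)
    (f : Fin m → (Fin n → Fin 2) → ℝ)
    (S : Fin m → Finset (Fin n))
    (hScard : ∀ ℓ, (S ℓ).card ≤ r)
    (hdep : ∀ ℓ (x y : Fin n → Fin 2), (∀ i ∈ S ℓ, x i = y i) → f ℓ x = f ℓ y)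
    (hvanish : ∀ x : Fin n → Fin 2, 2 * (∑ i, (x i : ℕ)) ≠ n → (∑ ℓ, f ℓ x) = 0) :
    ∀ x : Fin n → Fin 2, (∑ ℓ, f ℓ x) = 0 := by
  classical
  set χ : Finset (Fin n) → (Fin n → Fin 2) := fun Y i => if i ∈ Y then 1 else 0 with hχ
  have hweight : ∀ Z : Finset (Fin n), (∑ i, ((χ Z) i : ℕ)) = Z.card := by
    intro Z
    simp only [hχ, apply_ite (Fin.val : Fin 2 → ℕ), Fin.val_one, Fin.val_zero]
    simp [Finset.sum_ite_mem]
  intro x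
  set Y : Finset (Fin n) := Finset.univ.filter (fun i => x i = 1) with hY
  have hx : χ Y = x := by
    funext i
    by_cases h : x i = 1
    · simp [hχ, hY, h]
    · have h0 : x i = 0 := by omega
      simp [hχ, hY, h, h0]
  have hw : (∑ i, (x i : ℕ)) = Y.card := by rw [← hx]; exact hweight Y
  by_cases hmid : 2 * (∑ i, (x i : ℕ)) = n
  · have hYcard : 2 * Y.card = n := by omega
    have hrY : r < Y.card := by omega
    -- cancellation: for each junta the signed sum over subsets of Y vanishes
    have hcancel : ∀ ℓ, ∑ Z ∈ Y.powerset, (-1 : ℝ) ^ Z.card * f ℓ (χ Z) = 0 := by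
      intro ℓ
      obtain ⟨i, hiY, hiS⟩ : ∃ i ∈ Y, i ∉ S ℓ := by
        by_contra h
        push_neg at h
        have := Finset.card_le_card h
        have := hScard ℓ
        omega
      have hins : Y = insert i (Y.erase i) := (Finset.insert_erase hiY).symm
      have hinot : i ∉ Y.erase i := Finset.notMem_erase i Y
      rw [hins, Finset.powerset_insert, Finset.sum_union, Finset.sum_image]
      · rw [← Finset.sum_add_distrib]
        apply Finset.sum_eq_zero
        intro Z hZ
        have hiZ : i ∉ Z := fun h =>
          hinot (Finset.mem_powerset.mp hZ h)
        have hcard : (insert i Z).card = Z.card + 1 := Finset.card_insert_of_notMem hiZ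
        have hf : f ℓ (χ Z) = f ℓ (χ (insert i Z)) := by
          apply hdep
          intro j hj
          have : j ≠ i := fun h => hiS (h ▸ hj)
          simp [hχ, Finset.mem_insert, this]
        rw [hcard, hf, pow_succ]
        ring
      · intro Z₁ h₁ Z₂ h₂ h
        have h₁' : i ∉ Z₁ := fun hh => hinot (Finset.mem_powerset.mp h₁ hh)
        have h₂' : i ∉ Z₂ := fun hh => hinot (Finset.mem_powerset.mp h₂ hh)
        have := congrArg (Finset.erase · i) h
        simpa [Finset.erase_insert h₁', Finset.erase_insert h₂'] using this
      · rw [Finset.disjoint_right]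
        intro Z hZ hZ'
        obtain ⟨W, hW, rfl⟩ := Finset.mem_image.mp hZ
        exact (fun h => hinot (Finset.mem_powerset.mp hZ' h)) (Finset.mem_insert_self i W)
    have h0 : ∑ Z ∈ Y.powerset, (-1 : ℝ) ^ Z.card * (∑ ℓ, f ℓ (χ Z)) = 0 := by
      rw [Finset.sum_congr rfl (fun Z _ => Finset.mul_sum _ _ _), Finset.sum_comm]
      exact Finset.sum_eq_zero fun ℓ _ => hcancel ℓ
    have hsingle : ∑ Z ∈ Y.powerset, (-1 : ℝ) ^ Z.card * (∑ ℓ, f ℓ (χ Z))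
        = (-1 : ℝ) ^ Y.card * (∑ ℓ, f ℓ (χ Y)) := by
      apply Finset.sum_eq_single_of_mem Y (Finset.mem_powerset_self Y)
      intro Z hZ hne
      have hsub : Z ⊆ Y := Finset.mem_powerset.mp hZ
      have hlt : Z.card < Y.card := Finset.card_lt_card (hsub.ssubset_of_ne hne)
      have : (∑ ℓ, f ℓ (χ Z)) = 0 := by
        apply hvanish
        rw [hweight Z]; omega
      rw [this, mul_zero]
    rw [hsingle, hx] at h0
    have hne : ((-1 : ℝ) ^ Y.card) ≠ 0 := by positivity
    exact (mul_eq_zero.mp h0).resolve_left hne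
  · exact hvanish x hmid
end
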